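/- Let ρ be a density matrix indexed by (Fin 2 × Fin 2) such that Tr((Tr_A ρ)²) = 1. Then all two-point correlations factorize: for all i, j ∈ {1, 2, 3}, Tr(ρ · (σ_i ⊗ σ_j)) = Tr(ρ · (σ_i ⊗ I₂)) · Tr(ρ · (I₂ ⊗ σ_j)), and all these traces are real numbers. (In coherence-vector notation this reads v^{AB} = 2 · v^A ⊗ v^B.) -/

import Mathlib

open ComplexOrder Kronecker

/-- A density matrix: Hermitian, positive semidefinite, trace one. -/
def IsDensityMatrix {n : Type*} [Fintype n] [DecidableEq n] (ρ : Matrix n n ℂ) : Prop :=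
  ρ.IsHermitian ∧ ρ.PosSemidef ∧ ρ.trace = 1

/-- Partial trace over the first factor. -/
noncomputable def ptraceA {nA nB : ℕ} (M : Matrix (Fin nA × Fin nB) (Fin nA × Fin nB) ℂ) :
    Matrix (Fin nB) (Fin nB) ℂ :=
  Matrix.of fun j j' => ∑ i, M (i, j) (i, j')

/-- The Pauli matrices σ₁, σ₂, σ₃. -/
def σ : Fin 3 → Matrix (Fin 2) (Fin 2) ℂ
  | 0 => !![0, 1; 1, 0]
  | 1 => !![0, -Complex.I; Complex.I, 0]
  | 2 => !![1, 0; 0, -1]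

/-! The reduced state `B = Tr_A ρ` has `Tr B = 1` and `Tr B² = 1`; since `Tr B² = (Tr B)² - 2 det B`
for `2 × 2` matrices, `det B = 0`, which in dimension two means `B N B = Tr (B N) • B` for all
`N`; in particular (`N = 1`) `B` is a projection. As `ρ ≥ 0` and
`Tr (ρ (1 ⊗ (1 - B))) = Tr (B (1 - B)) = 0`, the support of `ρ` lies in the range of `1 ⊗ B`,
so `ρ = (1 ⊗ B) ρ (1 ⊗ B)` and `Tr (ρ (M ⊗ N)) = Tr (ρ (M ⊗ B N B)) = Tr (B N) Tr (ρ (M ⊗ B))`,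
which is the factorization. The traces are real because `ρ` and the Pauli products are
Hermitian. -/

open Matrix

section FinTwo

variable {R : Type*} [CommRing R]

theorem Matrix.trace_mul_self_fin_two (A : Matrix (Fin 2) (Fin 2) R) :
    (A * A).trace = A.trace ^ 2 - 2 * A.det := by
  simp only [trace_fin_two, det_fin_two, mul_apply, Fin.sum_univ_two]
  ring

theorem Matrix.mul_mul_eq_trace_mul_smul_fin_two {A : Matrix (Fin 2) (Fin 2) R}
    (hA : A.det = 0) (M : Matrix (Fin 2) (Fin 2) R) : A * M * A = (A * M).trace • A := by
  rw [det_fin_two] at hA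
  ext i j
  fin_cases i <;> fin_cases j <;>
    simp only [mul_apply, smul_apply, trace_fin_two, Fin.sum_univ_two, smul_eq_mul, Fin.isValue,
      Fin.zero_eta, Fin.mk_one]
  · linear_combination -M 1 1 * hA
  · linear_combination M 0 1 * hA
  · linear_combination M 1 0 * hA
  · linear_combination -M 0 0 * hA

end FinTwo

theorem Matrix.IsHermitian.kronecker {m n : Type*} {R : Type*} [CommSemiring R] [StarRing R]
    {A : Matrix m m R} {B : Matrix n n R} (hA : A.IsHermitian) (hB : B.IsHermitian) :
    (A ⊗ₖ B).IsHermitian := by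
  rw [IsHermitian, conjTranspose_kronecker, hA.eq, hB.eq]

theorem Matrix.IsHermitian.im_trace_mul_eq_zero {n : Type*} [Fintype n] {A B : Matrix n n ℂ}
    (hA : A.IsHermitian) (hB : B.IsHermitian) : (A * B).trace.im = 0 := by
  refine Complex.conj_eq_iff_im.mp ?_
  rw [← Complex.star_def, ← trace_conjTranspose, conjTranspose_mul, hA.eq, hB.eq, trace_mul_comm]

theorem isHermitian_σ (k : Fin 3) : (σ k).IsHermitian := by
  fin_cases k <;> (ext a b; fin_cases a <;> fin_cases b <;> simp [σ])

open scoped MatrixOrder in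
theorem Matrix.PosSemidef.mul_eq_zero_of_trace_eq_zero {m n 𝕜 : Type*} [Fintype m]
    [DecidableEq m] [Fintype n] [RCLike 𝕜] {A : Matrix m m 𝕜} (hA : A.PosSemidef) {B : Matrix m n 𝕜}
    (h : (Bᴴ * A * B).trace = 0) : A * B = 0 := by
  obtain ⟨C, rfl⟩ := CStarAlgebra.nonneg_iff_eq_star_mul_self.mp hA.nonneg
  have hCB : C * B = 0 := by
    rw [← trace_conjTranspose_mul_self_eq_zero_iff, conjTranspose_mul]
    simpa [star_eq_conjTranspose, Matrix.mul_assoc] using h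
  rw [star_eq_conjTranspose, Matrix.mul_assoc, hCB, Matrix.mul_zero]

section PartialTrace

variable {nA nB : ℕ}

theorem trace_ptraceA (M : Matrix (Fin nA × Fin nB) (Fin nA × Fin nB) ℂ) :
    (ptraceA M).trace = M.trace := by
  simp only [trace, diag, ptraceA, of_apply, Fintype.sum_prod_type]
  rw [Finset.sum_comm]

theorem Matrix.IsHermitian.ptraceA {M : Matrix (Fin nA × Fin nB) (Fin nA × Fin nB) ℂ}
    (hM : M.IsHermitian) : (ptraceA M).IsHermitian := by
  ext j j'
  simp only [conjTranspose_apply, _root_.ptraceA, of_apply, star_sum]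
  exact Finset.sum_congr rfl fun i _ => by rw [← conjTranspose_apply, hM.eq]

theorem trace_mul_one_kronecker_eq_trace_ptraceA_mul
    (M : Matrix (Fin nA × Fin nB) (Fin nA × Fin nB) ℂ) (N : Matrix (Fin nB) (Fin nB) ℂ) :
    (M * (1 ⊗ₖ N)).trace = (ptraceA M * N).trace := by
  simp only [trace, diag_apply, mul_apply, kroneckerMap_apply, one_apply, ite_mul, one_mul,
    zero_mul, mul_ite, mul_zero, Fintype.sum_prod_type, Finset.sum_ite_irrel,
    Finset.sum_const_zero, Finset.sum_ite_eq', Finset.mem_univ, ↓reduceIte, ptraceA, of_apply,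
    Finset.sum_mul]
  rw [Finset.sum_comm]
  exact Finset.sum_congr rfl fun _ _ => Finset.sum_comm

end PartialTrace

theorem Matrix.trace_mul_kronecker_eq_of_sandwich {m n R : Type*} [Fintype m] [Fintype n]
    [DecidableEq m] [DecidableEq n] [CommSemiring R] {ρ : Matrix (m × n) (m × n) R}
    {B : Matrix n n R} (hρB : ρ * (1 ⊗ₖ B) = ρ) (hBρ : (1 ⊗ₖ B) * ρ = ρ)
    (M : Matrix m m R) (N : Matrix n n R) :
    (ρ * (M ⊗ₖ N)).trace = (ρ * (M ⊗ₖ (B * N * B))).trace := by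
  set X : Matrix (m × n) (m × n) R := 1 ⊗ₖ B
  calc (ρ * (M ⊗ₖ N)).trace = (X * (ρ * X * (M ⊗ₖ N))).trace := by
        rw [← Matrix.mul_assoc, ← Matrix.mul_assoc, hBρ, hρB]
    _ = (ρ * (X * (M ⊗ₖ N) * X)).trace := by
        rw [trace_mul_comm]; simp only [Matrix.mul_assoc]
    _ = (ρ * (M ⊗ₖ (B * N * B))).trace := by
        rw [← mul_kronecker_mul, ← mul_kronecker_mul, Matrix.one_mul, Matrix.mul_one]

section ReducedState

variable {nA nB : ℕ} {ρ : Matrix (Fin nA × Fin nB) (Fin nA × Fin nB) ℂ}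

theorem Matrix.PosSemidef.mul_one_kronecker_ptraceA (hρ : ρ.PosSemidef)
    (hB : IsIdempotentElem (ptraceA ρ)) : ρ * (1 ⊗ₖ ptraceA ρ) = ρ := by
  set B := ptraceA ρ
  have hQ : ρ * (1 ⊗ₖ (1 - B)) = 0 := by
    refine hρ.mul_eq_zero_of_trace_eq_zero ?_
    rw [(isHermitian_one.kronecker (isHermitian_one.sub hρ.isHermitian.ptraceA)).eq,
      trace_mul_cycle, ← mul_kronecker_mul, Matrix.one_mul, hB.one_sub.eq, trace_mul_comm,
      trace_mul_one_kronecker_eq_trace_ptraceA_mul, hB.mul_one_sub_self, trace_zero]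
  calc ρ * (1 ⊗ₖ B) = ρ * (1 ⊗ₖ B) + ρ * (1 ⊗ₖ (1 - B)) := by rw [hQ, add_zero]
    _ = ρ := by rw [← Matrix.mul_add, ← kronecker_add, add_sub_cancel, one_kronecker_one,
      Matrix.mul_one]

theorem Matrix.PosSemidef.one_kronecker_ptraceA_mul (hρ : ρ.PosSemidef)
    (hB : IsIdempotentElem (ptraceA ρ)) : (1 ⊗ₖ ptraceA ρ) * ρ = ρ := by
  have h := congrArg (·ᴴ) (hρ.mul_one_kronecker_ptraceA hB)
  simpa only [conjTranspose_mul, conjTranspose_kronecker, conjTranspose_one,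
    hρ.isHermitian.eq, hρ.isHermitian.ptraceA.eq] using h

theorem Matrix.PosSemidef.trace_mul_kronecker_eq_mul (hρ : ρ.PosSemidef) (htr : ρ.trace = 1)
    (hB : ∀ N, ptraceA ρ * N * ptraceA ρ = (ptraceA ρ * N).trace • ptraceA ρ)
    (M : Matrix (Fin nA) (Fin nA) ℂ) (N : Matrix (Fin nB) (Fin nB) ℂ) :
    (ρ * (M ⊗ₖ N)).trace = (ρ * (M ⊗ₖ 1)).trace * (ρ * (1 ⊗ₖ N)).trace := by
  set B := ptraceA ρ
  have hBtr : B.trace = 1 := (trace_ptraceA ρ).trans htr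
  have hBB : IsIdempotentElem B := by simpa [IsIdempotentElem, hBtr] using hB 1
  have key : ∀ N, (ρ * (M ⊗ₖ N)).trace = (B * N).trace * (ρ * (M ⊗ₖ B)).trace := fun N => by
    rw [trace_mul_kronecker_eq_of_sandwich (hρ.mul_one_kronecker_ptraceA hBB)
      (hρ.one_kronecker_ptraceA_mul hBB), hB, kronecker_smul, Matrix.mul_smul, trace_smul,
      smul_eq_mul]
  rw [key N, key 1, trace_mul_one_kronecker_eq_trace_ptraceA_mul, Matrix.mul_one, hBtr]
  ring

end ReducedState

/-- If the reduced state of the second qubit is pure, then all two-point correlations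
factorize (v^{AB} = 2 v^A ⊗ v^B in coherence-vector notation), and the involved traces
are real. -/
theorem correlations_factorize_of_reduced_pure (ρ : Matrix (Fin 2 × Fin 2) (Fin 2 × Fin 2) ℂ)
    (hρ : IsDensityMatrix ρ)
    (hpure : (ptraceA ρ * ptraceA ρ).trace = 1) :
    ∀ i j : Fin 3,
      ((ρ * (σ i ⊗ₖ σ j)).trace).im = 0 ∧
      ((ρ * (σ i ⊗ₖ (1 : Matrix (Fin 2) (Fin 2) ℂ))).trace).im = 0 ∧
      ((ρ * ((1 : Matrix (Fin 2) (Fin 2) ℂ) ⊗ₖ σ j)).trace).im = 0 ∧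
      (ρ * (σ i ⊗ₖ σ j)).trace =
        (ρ * (σ i ⊗ₖ (1 : Matrix (Fin 2) (Fin 2) ℂ))).trace *
          (ρ * ((1 : Matrix (Fin 2) (Fin 2) ℂ) ⊗ₖ σ j)).trace := by
  obtain ⟨hH, hPSD, htr⟩ := hρ
  have hBtr : (ptraceA ρ).trace = 1 := (trace_ptraceA ρ).trans htr
  have hdet : (ptraceA ρ).det = 0 := by
    have h := trace_mul_self_fin_two (ptraceA ρ)
    rw [hpure, hBtr] at h
    linear_combination h / 2
  intro i j
  exact ⟨hH.im_trace_mul_eq_zero ((isHermitian_σ i).kronecker (isHermitian_σ j)),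
    hH.im_trace_mul_eq_zero ((isHermitian_σ i).kronecker isHermitian_one),
    hH.im_trace_mul_eq_zero (isHermitian_one.kronecker (isHermitian_σ j)),
    hPSD.trace_mul_kronecker_eq_mul htr (mul_mul_eq_trace_mul_smul_fin_two hdet) _ _⟩
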